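/- arXiv:1810.11079 — 4 statements merged into one kernel-verified Lean document; each statement's English description precedes it below -/
import Mathlib

section
/- Fix an integer g ≥ 1 and integers k, j with 1 ≤ k ≤ j ≤ g. Then the following identity of polynomials in ℚ[e₁,…,e_{2g+1}] holds: (−1)^{k+j+1} · 4 · Σ_{I₀} Σ_{n=1}^{k} n · ( s_{g−k+n}(I₀) · S_{g−j−n+1}(J₀) + s_{g−j−n}(I₀) · S_{g+n−k+1}(J₀) ) = λ_{k+j} · ( C(2g+1, g) / C(2g+1, 2g+1−k−j) ) · Σ_{n=1}^{k} n · ( C(g, g−k+n)·C(g+1, g−j−n+1) + C(g, g−j−n)·C(g+1, g−k+n+1) ), where the outer sum on the left runs over all g-element subsets I₀ of {1,…,2g+1}, J₀ denotes the complement of I₀, and C(a,b) denotes the binomial coefficient (with C(a,b) = 0 when b < 0 or b > a). (Equivalently: the entries Λ_{k,j} = −4 Σ_{I₀} ℘-sum of the matrix Λ_g are given by the stated binomial-coefficient multiple of λ_{k+j}.) -/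
/-
Expanding `s_a(I) · S_b(Iᶜ)` into squarefree monomials and summing over all `g`-subsets `I`,
the monomial `e_T` (`#T = a + b`) is counted once for each `I` with `#(I ∩ T) = a`, that is
`C(a+b, a) · C(2g+1-(a+b), g-a)` times. Hence every inner sum is a rational multiple of
`σ_d`, `d = 2g+1-(k+j)`, which is `±λ_{k+j}/4`; the multinomial symmetry
`C(N,d) C(d,a) C(N-d,g-a) = C(N,g) C(g,a) C(N-g,d-a)` rewrites that multiple as the stated
ratio of binomial coefficients.
-/

open MvPolynomial Finset

noncomputable section

/-- `m`-th elementary symmetric polynomial of the variables `{eᵢ : i ∈ I}`, with the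
convention that it vanishes for negative index `m`. -/
def esymmOn (g : ℕ) (I : Finset (Fin (2 * g + 1))) (m : ℤ) :
    MvPolynomial (Fin (2 * g + 1)) ℚ :=
  if m < 0 then 0 else (I.val.map X).esymm m.toNat

/-- The coefficients λ_m defined by `4∏_{j}(x−e_j) = 4x^{2g+1} + Σ_{i=0}^{2g} λᵢ xⁱ`
(together with λ_{2g+1} = 4), i.e. `λ_m = 4(−1)^{2g+1−m} σ_{2g+1−m}(e₁,…,e_{2g+1})`. -/
def lamPoly (g : ℕ) (m : ℕ) : MvPolynomial (Fin (2 * g + 1)) ℚ :=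
  4 * (-1) ^ (2 * g + 1 - m) *
    ((Finset.univ : Finset (Fin (2 * g + 1))).val.map X).esymm (2 * g + 1 - m)

/-- Binomial coefficient `C(a,b)` with an integer lower index, vanishing for `b < 0`
(and, as usual, for `b > a`). -/
def Cz (a : ℕ) (b : ℤ) : ℕ := if b < 0 then 0 else a.choose b.toNat

theorem Nat.choose_mul_choose_sub_comm (n p q : ℕ) :
    n.choose p * (n - p).choose q = n.choose q * (n - q).choose p := by
  have hp := Nat.choose_mul (n := n) (Nat.le_add_right p q)
  have hq := Nat.choose_mul (n := n) (Nat.le_add_left q p)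
  rw [Nat.add_sub_cancel_left] at hp
  rw [Nat.add_sub_cancel] at hq
  rw [← hp, ← hq, Nat.choose_symm_add]

theorem Nat.choose_mul_choose_mul_choose_sub_comm {n d g a : ℕ} (had : a ≤ d) (hag : a ≤ g) :
    n.choose d * (d.choose a * (n - d).choose (g - a)) =
      n.choose g * (g.choose a * (n - g).choose (d - a)) := by
  have expand {d g : ℕ} (had : a ≤ d) : n.choose d * (d.choose a * (n - d).choose (g - a)) =
      n.choose a * ((n - a).choose (d - a) * (n - a - (d - a)).choose (g - a)) := by
    rw [← mul_assoc, Nat.choose_mul had, show n - a - (d - a) = n - d by omega, mul_assoc]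
  rw [expand had, expand hag, Nat.choose_mul_choose_sub_comm]

section

variable {σ : Type*} [Fintype σ] [DecidableEq σ]

theorem Finset.sum_powersetCard_prod_compl_union {M : Type*} [AddCommMonoid M] (U : Finset σ)
    (p q : ℕ) (F : Finset σ → M) :
    ∑ AB ∈ U.powersetCard p ×ˢ Uᶜ.powersetCard q, F (AB.1 ∪ AB.2) =
      ∑ X ∈ univ.powersetCard (p + q) with #(X ∩ U) = p, F X := by
  have split {A B : Finset σ} (hA : A ⊆ U) (hB : B ⊆ Uᶜ) :
      (A ∪ B) ∩ U = A ∧ (A ∪ B) \ U = B := by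
    rw [subset_compl_iff_disjoint_right] at hB
    rw [union_inter_distrib_right, inter_eq_left.mpr hA, disjoint_iff_inter_eq_empty.mp hB,
      union_empty, union_sdiff_distrib, sdiff_eq_empty_iff_subset.mpr hA, empty_union,
      sdiff_eq_self_of_disjoint hB]
    exact ⟨rfl, rfl⟩
  refine sum_nbij' (fun AB ↦ AB.1 ∪ AB.2) (fun X ↦ (X ∩ U, X \ U)) ?_ ?_ ?_ ?_ fun _ _ ↦ rfl
  · rintro ⟨A, B⟩ h
    simp only [mem_product, mem_powersetCard] at h
    obtain ⟨⟨hAU, rfl⟩, hBU, rfl⟩ := h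
    have hAB : Disjoint A B :=
      disjoint_of_subset_left hAU (subset_compl_iff_disjoint_right.mp hBU).symm
    simp [card_union_of_disjoint hAB, (split hAU hBU).1]
  · intro X hX
    simp only [mem_filter, mem_powersetCard, subset_univ, true_and] at hX
    have := card_inter_add_card_sdiff X U
    refine mem_product.mpr ⟨mem_powersetCard.mpr ⟨inter_subset_right, hX.2⟩,
      mem_powersetCard.mpr ⟨?_, show #(X \ U) = q by omega⟩⟩
    rw [sdiff_eq_inter_compl]
    exact inter_subset_right
  · rintro ⟨A, B⟩ h
    simp only [mem_product, mem_powersetCard] at h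
    simp [split h.1.1 h.2.1]
  · intro X _
    exact (union_comm _ _).trans (sdiff_union_inter X U)

theorem Finset.card_powersetCard_filter_card_inter_eq (U : Finset σ) {p n : ℕ} (hpn : p ≤ n) :
    #{X ∈ univ.powersetCard n | #(X ∩ U) = p} =
      (#U).choose p * (Fintype.card σ - #U).choose (n - p) := by
  obtain ⟨q, rfl⟩ := Nat.exists_eq_add_of_le hpn
  rw [card_eq_sum_ones, ← sum_powersetCard_prod_compl_union U p q fun _ ↦ 1, ← card_eq_sum_ones,
    card_product, card_powersetCard, card_powersetCard, card_compl, Nat.add_sub_cancel_left]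

variable {R : Type*} [CommSemiring R]

theorem Finset.esymm_map_val_mul_esymm_map_val_compl (x : σ → R) (U : Finset σ) (p q : ℕ) :
    (U.val.map x).esymm p * (Uᶜ.val.map x).esymm q =
      ∑ X ∈ univ.powersetCard (p + q) with #(X ∩ U) = p, ∏ i ∈ X, x i := by
  rw [esymm_map_val, esymm_map_val, sum_mul_sum, ← sum_product',
    ← sum_powersetCard_prod_compl_union]
  refine sum_congr rfl fun AB hAB ↦ (prod_union ?_).symm
  simp only [mem_product, mem_powersetCard] at hAB
  exact disjoint_of_subset_left hAB.1.1 (subset_compl_iff_disjoint_right.mp hAB.2.1).symm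

theorem Finset.sum_powersetCard_esymm_mul_esymm_compl (x : σ → R) {a g : ℕ} (b : ℕ)
    (hag : a ≤ g) :
    ∑ I ∈ univ.powersetCard g, (I.val.map x).esymm a * (Iᶜ.val.map x).esymm b =
      ((a + b).choose a * (Fintype.card σ - (a + b)).choose (g - a)) •
        (univ.val.map x).esymm (a + b) := by
  simp_rw [esymm_map_val_mul_esymm_map_val_compl, esymm_map_val, smul_sum]
  rw [sum_comm' (t' := univ.powersetCard (a + b))
    (s' := fun X ↦ {I ∈ univ.powersetCard g | #(I ∩ X) = a}) (by simp [inter_comm]; tauto)]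
  refine sum_congr rfl fun X hX ↦ ?_
  rw [sum_const, card_powersetCard_filter_card_inter_eq X hag, (mem_powersetCard.mp hX).2]

end

lemma esymmOn_natCast (g : ℕ) (I : Finset (Fin (2 * g + 1))) (m : ℕ) :
    esymmOn g I m = (I.val.map X).esymm m := by
  simp [esymmOn]

lemma esymmOn_of_neg (g : ℕ) (I : Finset (Fin (2 * g + 1))) {m : ℤ} (hm : m < 0) :
    esymmOn g I m = 0 := if_pos hm

lemma Cz_of_neg (a : ℕ) {b : ℤ} (hb : b < 0) : Cz a b = 0 := if_pos hb

lemma Cz_natCast (a b : ℕ) : Cz a b = a.choose b := by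
  simp [Cz]

lemma sum_esymmOn_mul_esymmOn_compl {g d : ℕ} {α β : ℤ} (hαg : α ≤ g) (hαβ : α + β = d)
    (hd : d ≤ 2 * g + 1) :
    ∑ I ∈ univ.powersetCard g, esymmOn g I α * esymmOn g Iᶜ β =
      (((2 * g + 1).choose g : ℚ) / (2 * g + 1).choose d * (Cz g α * Cz (g + 1) β : ℕ)) •
        (univ.val.map X).esymm d := by
  rcases lt_or_ge α 0 with hα | hα
  · simp [esymmOn_of_neg _ _ hα, Cz_of_neg _ hα]
  rcases lt_or_ge β 0 with hβ | hβ
  · simp [esymmOn_of_neg _ _ hβ, Cz_of_neg _ hβ]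
  lift α to ℕ using hα with a
  lift β to ℕ using hβ with b
  have hab : a + b = d := by exact_mod_cast hαβ
  subst hab
  simp only [esymmOn_natCast, Cz_natCast]
  rw [sum_powersetCard_esymm_mul_esymm_compl _ _ (by exact_mod_cast hαg),
    ← Nat.cast_smul_eq_nsmul ℚ, Fintype.card_fin]
  congr 1
  have hchoose : ((2 * g + 1).choose (a + b) : ℚ) ≠ 0 := by
    exact_mod_cast (Nat.choose_pos hd).ne'
  rw [div_mul_eq_mul_div, eq_div_iff hchoose]
  have := Nat.choose_mul_choose_mul_choose_sub_comm (n := 2 * g + 1) (Nat.le_add_right a b)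
    (show a ≤ g by exact_mod_cast hαg)
  rw [show 2 * g + 1 - g = g + 1 by omega, Nat.add_sub_cancel_left] at this
  rw [mul_comm]
  exact_mod_cast this

theorem lambda_matrix_entries_general (g k j : ℕ)
    (hkj : k ≤ j) (hj : j ≤ g) :
    (-1 : MvPolynomial (Fin (2 * g + 1)) ℚ) ^ (k + j + 1) * 4 *
      ∑ I ∈ (Finset.univ : Finset (Fin (2 * g + 1))).powersetCard g,
        ∑ n ∈ Finset.Icc 1 k,
          (n : MvPolynomial (Fin (2 * g + 1)) ℚ) *
            (esymmOn g I ((g : ℤ) - k + n) * esymmOn g Iᶜ ((g : ℤ) - j - n + 1) +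
              esymmOn g I ((g : ℤ) - j - n) * esymmOn g Iᶜ ((g : ℤ) + n - k + 1)) =
    lamPoly g (k + j) *
      C (((2 * g + 1).choose g : ℚ) / ((2 * g + 1).choose (2 * g + 1 - k - j) : ℚ)) *
      C ((∑ n ∈ Finset.Icc 1 k, (n : ℚ) *
          ((Cz g ((g : ℤ) - k + n) * Cz (g + 1) ((g : ℤ) - j - n + 1) +
            Cz g ((g : ℤ) - j - n) * Cz (g + 1) ((g : ℤ) - k + n + 1) : ℕ) : ℚ))) := by
  rw [show 2 * g + 1 - k - j = 2 * g + 1 - (k + j) by omega, lamPoly]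
  set d := 2 * g + 1 - (k + j)
  set σd := ((univ : Finset (Fin (2 * g + 1))).val.map (X (R := ℚ))).esymm d
  set r : ℚ := ((2 * g + 1).choose g : ℚ) / (2 * g + 1).choose d
  set c : ℕ → ℚ := fun n ↦ ((Cz g ((g : ℤ) - k + n) * Cz (g + 1) ((g : ℤ) - j - n + 1) +
    Cz g ((g : ℤ) - j - n) * Cz (g + 1) ((g : ℤ) - k + n + 1) : ℕ) : ℚ)
  have hterm : ∀ n ∈ Icc 1 k,
      ∑ I ∈ (univ : Finset (Fin (2 * g + 1))).powersetCard g,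
        (n : MvPolynomial (Fin (2 * g + 1)) ℚ) *
          (esymmOn g I ((g : ℤ) - k + n) * esymmOn g Iᶜ ((g : ℤ) - j - n + 1) +
            esymmOn g I ((g : ℤ) - j - n) * esymmOn g Iᶜ ((g : ℤ) + n - k + 1)) =
      (r * (n * c n)) • σd := by
    intro n hn
    rw [mem_Icc] at hn
    rw [← mul_sum, sum_add_distrib, sum_esymmOn_mul_esymmOn_compl (d := d) (by omega) (by omega)
      (by omega), sum_esymmOn_mul_esymmOn_compl (d := d) (by omega) (by omega) (by omega),
      ← add_smul, ← nsmul_eq_mul, ← Nat.cast_smul_eq_nsmul ℚ, smul_smul,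
      show (g : ℤ) + n - k + 1 = g - k + n + 1 by ring]
    congr 1
    simp only [c, r]
    push_cast
    ring
  have hsign : (-1 : MvPolynomial (Fin (2 * g + 1)) ℚ) ^ (k + j + 1) = (-1) ^ d := by
    rw [neg_one_pow_eq_pow_mod_two, neg_one_pow_eq_pow_mod_two (n := d)]
    congr 1
    omega
  rw [sum_comm, sum_congr rfl hterm, ← sum_smul, ← mul_sum, smul_eq_C_mul, map_mul, hsign]
  ring

theorem lambda_matrix_entries (g k j : ℕ) (hg : 1 ≤ g)
    (hk : 1 ≤ k) (hkj : k ≤ j) (hj : j ≤ g) :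
    (-1 : MvPolynomial (Fin (2 * g + 1)) ℚ) ^ (k + j + 1) * 4 *
      ∑ I ∈ (Finset.univ : Finset (Fin (2 * g + 1))).powersetCard g,
        ∑ n ∈ Finset.Icc 1 k,
          (n : MvPolynomial (Fin (2 * g + 1)) ℚ) *
            (esymmOn g I ((g : ℤ) - k + n) * esymmOn g Iᶜ ((g : ℤ) - j - n + 1) +
              esymmOn g I ((g : ℤ) - j - n) * esymmOn g Iᶜ ((g : ℤ) + n - k + 1)) =
    lamPoly g (k + j) *
      C (((2 * g + 1).choose g : ℚ) / ((2 * g + 1).choose (2 * g + 1 - k - j) : ℚ)) *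
      C ((∑ n ∈ Finset.Icc 1 k, (n : ℚ) *
          ((Cz g ((g : ℤ) - k + n) * Cz (g + 1) ((g : ℤ) - j - n + 1) +
            Cz g ((g : ℤ) - j - n) * Cz (g + 1) ((g : ℤ) - k + n + 1) : ℕ) : ℚ))) :=
  lambda_matrix_entries_general g k j hkj hj
end
end

section
/- Fix an integer g ≥ 1 and define, for 1 ≤ i ≤ j ≤ g, Λ_{i,j} = λ_{i+j} · ( C(2g+1, g) / C(2g+1, 2g+1−i−j) ) · Σ_{n=1}^{i} n · ( C(g, g−i+n)·C(g+1, g−j−n+1) + C(g, g−j−n)·C(g+1, g−i+n+1) ), extended symmetrically by Λ_{j,i} = Λ_{i,j}; here C(a,b) denotes the binomial coefficient (with C(a,b)=0 when b<0 or b>a). Then for every integer k with 2 ≤ k ≤ 2g, the anti-diagonal sum satisfies Σ_{i+j=k, 1≤i,j≤g} Λ_{i,j} = λ_k · ( N_g / (4g+2) ) · ( (1/2)·k·(2g+2−k) + (1/4)·(2g+1)·((−1)^k − 1) ), where N_g = C(2g+1, g). -/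
/- STATEMENT 1: the anti-diagonal sums of the matrix Λ_g satisfy
   Σ_{i+j=k} Λ_{i,j} = λ_k (N_g/(4g+2)) ((1/2)k(2g+2−k) + (1/4)(2g+1)((−1)^k−1)),
   as an identity in ℚ[e₁,…,e_{2g+1}]. -/

open MvPolynomial Finset

noncomputable section

/-- The entry `Λ_{i,j}` for `1 ≤ i ≤ j ≤ g`:
`Λ_{i,j} = λ_{i+j} (C(2g+1,g)/C(2g+1,2g+1−i−j)) Σ_{n=1}^{i} n (C(g,g−i+n)C(g+1,g−j−n+1)
  + C(g,g−j−n)C(g+1,g−i+n+1))`. -/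
def LamEntryLE (g i j : ℕ) : MvPolynomial (Fin (2 * g + 1)) ℚ :=
  lamPoly g (i + j) *
    C (((2 * g + 1).choose g : ℚ) / ((2 * g + 1).choose (2 * g + 1 - i - j) : ℚ)) *
    C ((∑ n ∈ Finset.Icc 1 i, (n : ℚ) *
        ((Cz g ((g : ℤ) - i + n) * Cz (g + 1) ((g : ℤ) - j - n + 1) +
          Cz g ((g : ℤ) - j - n) * Cz (g + 1) ((g : ℤ) - i + n + 1) : ℕ) : ℚ)))

/-- The entry `Λ_{i,j}`, extended symmetrically by `Λ_{j,i} = Λ_{i,j}`. -/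
def LamEntry (g i j : ℕ) : MvPolynomial (Fin (2 * g + 1)) ℚ :=
  LamEntryLE g (min i j) (max i j)

/-! Writing `m = min(i, k - i)`, the substitution `a = m - n` turns the inner sum of `Λ_{i,k-i}`
into `Σ_a (m - a)₊ w(a)` with `w(a) = C(g,a)C(g+1,k-a) + C(g,k-a)C(g+1,a)`, which depends on `k`
only. Summing over `i` gives `λ_k N_g / C(2g+1,k) · Σ_a c(a) w(a)`, where
`c(a) = Σ_i (min(i,k-i) - a)₊ = (⌊k/2⌋ - a)₊ (⌈k/2⌉ - a)₊` wherever `w(a) ≠ 0`. As `w` is symmetric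
under `a ↦ k - a`, `c(a)` may be replaced by `(c(a) + c(k-a))/2 = (⌊k/2⌋⌈k/2⌉ - a(k-a))/2`, and
the two remaining sums are Vandermonde's `Σ w = 2C(2g+1,k)` and its factorial moment
`Σ a(k-a) w = 2g(g+1)C(2g-1,k-2)`. -/

theorem Nat.sum_range_choose_mul_choose (m n k : ℕ) :
    ∑ a ∈ range (k + 1), m.choose a * n.choose (k - a) = (m + n).choose k := by
  rw [Nat.add_choose_eq, Nat.sum_antidiagonal_eq_sum_range_succ_mk]

theorem Nat.sum_range_mul_sub_mul_choose_mul_choose (m n k : ℕ) :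
    ∑ a ∈ range (k + 3), a * (k + 2 - a) * ((m + 1).choose a * (n + 1).choose (k + 2 - a)) =
      (m + 1) * (n + 1) * (m + n).choose k := by
  rw [sum_range_succ, sum_range_succ']
  have shift : ∀ a ∈ range (k + 1),
      (a + 1) * (k + 2 - (a + 1)) * ((m + 1).choose (a + 1) * (n + 1).choose (k + 2 - (a + 1))) =
        (m + 1) * (n + 1) * (m.choose a * n.choose (k - a)) := by
    intro a ha
    obtain ⟨b, rfl⟩ := Nat.exists_eq_add_of_le (Nat.lt_succ_iff.mp (mem_range.mp ha))
    rw [show a + b + 2 - (a + 1) = b + 1 by omega, add_tsub_cancel_left]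
    calc (a + 1) * (b + 1) * ((m + 1).choose (a + 1) * (n + 1).choose (b + 1))
        = ((m + 1).choose (a + 1) * (a + 1)) * ((n + 1).choose (b + 1) * (b + 1)) := by ring
      _ = (m + 1) * (n + 1) * (m.choose a * n.choose b) := by
        rw [← Nat.add_one_mul_choose_eq, ← Nat.add_one_mul_choose_eq]; ring
  rw [sum_congr rfl shift, ← mul_sum, Nat.sum_range_choose_mul_choose]
  simp

theorem Nat.choose_add_two_mul (n k : ℕ) :
    (n + 2).choose (k + 2) * ((k + 2) * (k + 1)) = (n + 2) * (n + 1) * n.choose k :=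
  calc (n + 2).choose (k + 2) * ((k + 2) * (k + 1))
      = ((n + 1 + 1).choose (k + 1 + 1) * (k + 1 + 1)) * (k + 1) := by ring
    _ = (n + 2) * ((n + 1).choose (k + 1) * (k + 1)) := by rw [← Nat.add_one_mul_choose_eq]; ring
    _ = (n + 2) * (n + 1) * n.choose k := by rw [← Nat.add_one_mul_choose_eq]; ring

theorem Nat.cast_div_two_mul_sub_div_two (k : ℕ) :
    ((k / 2 : ℕ) * (k - k / 2 : ℕ) : ℚ) = k ^ 2 / 4 + ((-1) ^ k - 1) / 8 := by
  obtain ⟨m, rfl | rfl⟩ := Nat.even_or_odd' k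
  · rw [Nat.mul_div_cancel_left m two_pos, show 2 * m - m = m by omega, pow_mul]
    push_cast
    ring
  · rw [show (2 * m + 1) / 2 = m by omega, show 2 * m + 1 - m = m + 1 by omega,
      pow_succ (-1 : ℚ), pow_mul]
    push_cast
    ring

def binomWeight (g k a : ℕ) : ℕ :=
  g.choose a * (g + 1).choose (k - a) + g.choose (k - a) * (g + 1).choose a

theorem binomWeight_eq (g k a : ℕ) : binomWeight g k a =
    g.choose a * (g + 1).choose (k - a) + (g + 1).choose a * g.choose (k - a) := by
  rw [binomWeight, mul_comm (g.choose (k - a))]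

section binomWeight

variable {g k : ℕ}

theorem binomWeight_sub_self {a : ℕ} (h : a ≤ k) :
    binomWeight g k (k - a) = binomWeight g k a := by
  rw [binomWeight, binomWeight, Nat.sub_sub_self h, add_comm]

theorem binomWeight_eq_zero {a : ℕ} (h : g + 1 < a ∨ g + 1 < k - a) : binomWeight g k a = 0 := by
  rcases h with h | h <;> simp [binomWeight, Nat.choose_eq_zero_of_lt, h, h.trans' g.lt_succ_self]

theorem sum_binomWeight : ∑ a ∈ range (k + 1), binomWeight g k a = 2 * (2 * g + 1).choose k := by
  simp only [binomWeight_eq, sum_add_distrib, Nat.sum_range_choose_mul_choose]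
  rw [two_mul, two_mul, add_comm (g + 1), add_assoc]

theorem sum_mul_sub_mul_binomWeight (hg : 1 ≤ g) (hk : 2 ≤ k) :
    (2 * g + 1) * ∑ a ∈ range (k + 1), a * (k - a) * binomWeight g k a =
      (g + 1) * (k * (k - 1)) * (2 * g + 1).choose k := by
  obtain ⟨g, rfl⟩ := Nat.exists_eq_add_of_le' hg
  obtain ⟨k, rfl⟩ := Nat.exists_eq_add_of_le' hk
  simp only [binomWeight_eq, mul_add, sum_add_distrib, add_assoc k 2 1, Nat.reduceAdd,
    Nat.sum_range_mul_sub_mul_choose_mul_choose]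
  have := Nat.choose_add_two_mul (2 * g + 1) k
  rw [show g + (g + 1) = 2 * g + 1 by ring, show g + 1 + g = 2 * g + 1 by ring,
    show k + 2 - 1 = k + 1 by omega, show 2 * g + 2 * 1 + 1 = 2 * g + 1 + 2 by ring]
  linear_combination (g + 2) * this.symm

end binomWeight

def antidiagRange (g k : ℕ) : Finset ℕ := Icc (max 1 (k - g)) (min g (k - 1))

theorem mem_antidiagRange {g k i : ℕ} :
    i ∈ antidiagRange g k ↔ (1 ≤ i ∧ i ≤ g) ∧ (1 ≤ k - i ∧ k - i ≤ g) ∧ i ≤ k := by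
  simp only [antidiagRange, mem_Icc]
  omega

theorem sum_filter_add_eq_sum_antidiagRange {M : Type*} [AddCommMonoid M] (f : ℕ → ℕ → M)
    (g k : ℕ) :
    ∑ p ∈ (Icc 1 g ×ˢ Icc 1 g).filter (fun p => p.1 + p.2 = k), f p.1 p.2 =
      ∑ i ∈ antidiagRange g k, f i (k - i) := by
  refine sum_nbij' Prod.fst (fun i => (i, k - i)) ?_ ?_ ?_ (fun _ _ => rfl) ?_ <;>
    simp only [mem_filter, mem_product, mem_Icc, mem_antidiagRange, Prod.forall,
      Prod.mk.injEq, true_and]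
  · intro i j
    omega
  · intro i
    omega
  · intro i j
    omega
  · rintro i j ⟨-, rfl⟩
    rw [Nat.add_sub_cancel_left]

def antidiagExcess (g k a : ℕ) : ℕ := ∑ i ∈ antidiagRange g k, (min i (k - i) - a)

section antidiagExcess

variable {g k a : ℕ}

theorem antidiagExcess_eq_zero (h : k / 2 ≤ a) : antidiagExcess g k a = 0 :=
  sum_eq_zero fun i _ => by omega

theorem antidiagExcess_eq_add (h : k ≤ a + g + 1) :
    antidiagExcess g k a = antidiagExcess g k (a + 1) + (k - (2 * a + 1)) := by
  have split : ∀ i ∈ antidiagRange g k,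
      min i (k - i) - a = (min i (k - i) - (a + 1)) + if a + 1 ≤ min i (k - i) then 1 else 0 := by
    intro i _
    split <;> omega
  have above : (antidiagRange g k).filter (fun i => a + 1 ≤ min i (k - i)) =
      Icc (a + 1) (k - (a + 1)) := by
    ext i
    simp only [mem_filter, mem_antidiagRange, mem_Icc]
    omega
  rw [antidiagExcess, sum_congr rfl split, sum_add_distrib, sum_boole, above, Nat.card_Icc,
    Nat.cast_id, antidiagExcess]
  omega

theorem antidiagExcess_eq_mul (h : k ≤ a + g + 1) :
    antidiagExcess g k a = (k / 2 - a) * (k - k / 2 - a) := by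
  induction hd : k / 2 - a generalizing a with
  | zero => rw [antidiagExcess_eq_zero (by omega), zero_mul]
  | succ d ih =>
    rw [antidiagExcess_eq_add h, ih (by omega) (by omega),
      show k - k / 2 - a = (k - k / 2 - (a + 1)) + 1 by omega,
      show k - (2 * a + 1) = d + (k - k / 2 - (a + 1)) + 1 by omega]
    ring

theorem antidiagExcess_add_antidiagExcess_sub (h₁ : k ≤ a + g + 1) (h₂ : a ≤ g + 1)
    (ha : a ≤ k) :
    (antidiagExcess g k a + antidiagExcess g k (k - a) : ℚ) =
      a * (a - k) + (k / 2 : ℕ) * (k - k / 2 : ℕ) := by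
  have hk : ((k / 2 : ℕ) : ℚ) + (k - k / 2 : ℕ) = k := by
    rw [← Nat.cast_add, Nat.add_sub_cancel' (Nat.div_le_self k 2)]
  rcases le_or_gt a (k / 2) with hle | hgt
  · rw [antidiagExcess_eq_mul h₁, antidiagExcess_eq_zero (a := k - a) (by omega), Nat.cast_mul,
      Nat.cast_sub hle, Nat.cast_sub (by omega : a ≤ k - k / 2)]
    linear_combination -(a : ℚ) * hk
  · rw [antidiagExcess_eq_zero (a := a) (by omega), antidiagExcess_eq_mul (by omega), Nat.cast_mul,
      Nat.cast_sub (by omega : k - a ≤ k / 2), Nat.cast_sub (by omega : k - a ≤ k - k / 2),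
      Nat.cast_sub ha]
    linear_combination ((a : ℚ) - k) * hk

end antidiagExcess

theorem sum_antidiagExcess_mul_binomWeight {g k : ℕ} (hg : 1 ≤ g) (hk₂ : 2 ≤ k) :
    ∑ a ∈ range (k + 1), (antidiagExcess g k a * binomWeight g k a : ℚ) =
      (2 * g + 1).choose k / (4 * g + 2) *
        ((1 / 2) * k * (2 * g + 2 - k) + (1 / 4) * (2 * g + 1) * ((-1) ^ k - 1)) := by
  set P : ℚ := (k / 2 : ℕ) * (k - k / 2 : ℕ)
  have reflect : ∑ a ∈ range (k + 1), (antidiagExcess g k (k - a) * binomWeight g k a : ℚ) =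
      ∑ a ∈ range (k + 1), (antidiagExcess g k a * binomWeight g k a : ℚ) := by
    rw [← sum_range_reflect (fun a => (antidiagExcess g k a * binomWeight g k a : ℚ))]
    refine sum_congr rfl fun a ha => ?_
    rw [Nat.add_sub_cancel, binomWeight_sub_self (Nat.lt_succ_iff.mp (mem_range.mp ha))]
  have symmetrize : ∀ a ∈ range (k + 1),
      (antidiagExcess g k a + antidiagExcess g k (k - a) : ℚ) * binomWeight g k a =
        (P - a * (k - a)) * binomWeight g k a := by
    intro a ha
    by_cases hw : binomWeight g k a = 0
    · simp [hw]
    have h₁ : k ≤ a + g + 1 := by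
      by_contra! h
      exact hw (binomWeight_eq_zero (by omega))
    have h₂ : a ≤ g + 1 := by
      by_contra! h
      exact hw (binomWeight_eq_zero (by omega))
    rw [antidiagExcess_add_antidiagExcess_sub h₁ h₂ (Nat.lt_succ_iff.mp (mem_range.mp ha))]
    ring
  have total : ∑ a ∈ range (k + 1), (binomWeight g k a : ℚ) = 2 * (2 * g + 1).choose k := by
    exact_mod_cast sum_binomWeight
  have h2g : (2 * g + 1 : ℚ) ≠ 0 := by positivity
  have moment : ∑ a ∈ range (k + 1), (a * (k - a) * binomWeight g k a : ℚ) =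
      (g + 1) * (k * (k - 1)) * (2 * g + 1).choose k / (2 * g + 1) := by
    rw [eq_div_iff h2g, mul_comm]
    have := congrArg (Nat.cast (R := ℚ)) (sum_mul_sub_mul_binomWeight hg hk₂)
    push_cast [Nat.cast_sub (by omega : 1 ≤ k)] at this
    rw [← this]
    congr 1
    refine sum_congr rfl fun a ha => ?_
    rw [Nat.cast_sub (Nat.lt_succ_iff.mp (mem_range.mp ha))]
  have hP : P = k ^ 2 / 4 + ((-1) ^ k - 1) / 8 := Nat.cast_div_two_mul_sub_div_two k
  calc ∑ a ∈ range (k + 1), (antidiagExcess g k a * binomWeight g k a : ℚ)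
      = (1 / 2) * ∑ a ∈ range (k + 1),
          (antidiagExcess g k a + antidiagExcess g k (k - a) : ℚ) * binomWeight g k a := by
        simp only [add_mul, sum_add_distrib, reflect]
        ring
    _ = (1 / 2) * (P * ∑ a ∈ range (k + 1), (binomWeight g k a : ℚ) -
          ∑ a ∈ range (k + 1), (a * (k - a) * binomWeight g k a : ℚ)) := by
        rw [sum_congr rfl symmetrize]
        simp only [sub_mul, sum_sub_distrib, ← mul_sum]
    _ = _ := by
        rw [total, moment, hP]
        field_simp
        ring

theorem Cz_natCast_sub (a j : ℕ) : Cz a ((a : ℤ) - j) = a.choose j := by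
  rw [Cz]
  split_ifs with h
  · rw [Nat.choose_eq_zero_of_lt (by omega)]
  · rw [show ((a : ℤ) - j).toNat = a - j by omega, Nat.choose_symm (by omega)]

theorem sum_Icc_mul_Cz (g i j : ℕ) :
    ∑ n ∈ Icc 1 i, (n : ℚ) * ((Cz g ((g : ℤ) - i + n) * Cz (g + 1) ((g : ℤ) - j - n + 1) +
        Cz g ((g : ℤ) - j - n) * Cz (g + 1) ((g : ℤ) - i + n + 1) : ℕ) : ℚ) =
      ∑ a ∈ range (i + j + 1), ((i - a : ℕ) * binomWeight g (i + j) a : ℚ) := by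
  have weight : ∀ n ∈ Icc 1 i,
      (Cz g ((g : ℤ) - i + n) * Cz (g + 1) ((g : ℤ) - j - n + 1) +
        Cz g ((g : ℤ) - j - n) * Cz (g + 1) ((g : ℤ) - i + n + 1) : ℕ) =
      binomWeight g (i + j) (i - n) := by
    intro n hn
    have hni : n ≤ i := (mem_Icc.mp hn).2
    rw [binomWeight, show i + j - (i - n) = j + n by omega,
      ← Cz_natCast_sub g, ← Cz_natCast_sub g, ← Cz_natCast_sub (g + 1), ← Cz_natCast_sub (g + 1)]
    congr 3 <;> push_cast [hni] <;> ring
  rw [sum_congr rfl fun n hn => by rw [weight n hn]]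
  rw [← sum_subset (range_subset_range.mpr (by omega : i ≤ i + j + 1)) fun a _ ha => by
    rw [Nat.sub_eq_zero_of_le (not_lt.mp (mt mem_range.mpr ha)), Nat.cast_zero, zero_mul]]
  refine sum_nbij' (i - ·) (i - ·) ?_ ?_ ?_ ?_ ?_ <;> simp only [mem_Icc, mem_range]
  · intro n _
    omega
  · intro a _
    omega
  · intro n _
    omega
  · intro a _
    omega
  · intro n hn
    rw [Nat.sub_sub_self hn.2]

theorem LamEntry_eq (g i j : ℕ) :
    LamEntry g i j = lamPoly g (i + j) *
      C (((2 * g + 1).choose g : ℚ) / ((2 * g + 1).choose (2 * g + 1 - (i + j)) : ℚ)) *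
      C (∑ a ∈ range (i + j + 1), ((min i j - a : ℕ) * binomWeight g (i + j) a : ℚ)) := by
  rw [LamEntry, LamEntryLE, sum_Icc_mul_Cz, min_add_max, Nat.sub_sub, min_add_max]

theorem sum_antidiagRange_sum_eq_sum_antidiagExcess (g k : ℕ) :
    ∑ i ∈ antidiagRange g k, ∑ a ∈ range (k + 1),
        ((min i (k - i) - a : ℕ) * binomWeight g k a : ℚ) =
      ∑ a ∈ range (k + 1), (antidiagExcess g k a * binomWeight g k a : ℚ) := by
  rw [sum_comm]
  simp only [antidiagExcess, Nat.cast_sum, sum_mul]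

theorem lambda_antidiagonal_sum (g : ℕ) (hg : 1 ≤ g) (k : ℕ) (hk2 : 2 ≤ k)
    (hk : k ≤ 2 * g) :
    ∑ p ∈ ((Finset.Icc 1 g) ×ˢ (Finset.Icc 1 g)).filter (fun p => p.1 + p.2 = k),
        LamEntry g p.1 p.2 =
      lamPoly g k *
        C ((((2 * g + 1).choose g : ℚ) / (4 * (g : ℚ) + 2)) *
          ((1 / 2) * (k : ℚ) * (2 * (g : ℚ) + 2 - (k : ℚ)) +
            (1 / 4) * (2 * (g : ℚ) + 1) * ((-1 : ℚ) ^ k - 1))) := by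
  have entry : ∀ i ∈ antidiagRange g k, LamEntry g i (k - i) =
      lamPoly g k * C (((2 * g + 1).choose g : ℚ) / (2 * g + 1).choose k) *
        C (∑ a ∈ range (k + 1), ((min i (k - i) - a : ℕ) * binomWeight g k a : ℚ)) := by
    intro i hi
    rw [LamEntry_eq, Nat.add_sub_cancel' (mem_antidiagRange.mp hi).2.2, Nat.choose_symm (by omega)]
  have hchoose : ((2 * g + 1).choose k : ℚ) ≠ 0 := by
    exact_mod_cast (Nat.choose_pos (by omega)).ne'
  rw [sum_filter_add_eq_sum_antidiagRange, sum_congr rfl entry, ← mul_sum, ← map_sum,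
    sum_antidiagRange_sum_eq_sum_antidiagExcess, sum_antidiagExcess_mul_binomWeight hg hk2,
    mul_assoc, ← C_mul]
  congr 2
  field_simp
end
end

section
/- Let x₂, x₃, x₄ : ℝ → ℂ be differentiable functions satisfying the polynomial dynamical system x₂′ = x₃, x₃′ = x₄, x₄′ = 12 x₂ x₃. Then the two functions λ₄ = (1/2)x₄ − 3x₂² and λ₆ = (1/4)x₃² + 2x₂³ − (1/2)x₄x₂ are constant along every solution (their derivatives vanish identically). -/
section KdVIntegrals

variable {𝕜 : Type*} [RCLike 𝕜] {x₂ x₃ x₄ : ℝ → 𝕜} {t : ℝ}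

theorem hasDerivAt_kdv_lambda4 (h₂ : HasDerivAt x₂ (x₃ t) t)
    (h₄ : HasDerivAt x₄ (12 * x₂ t * x₃ t) t) :
    HasDerivAt (fun t => (1 / 2) * x₄ t - 3 * x₂ t ^ 2) 0 t := by
  refine ((h₄.const_mul (1 / 2)).sub ((h₂.pow 2).const_mul 3)).congr_deriv ?_
  ring

theorem hasDerivAt_kdv_lambda6 (h₂ : HasDerivAt x₂ (x₃ t) t) (h₃ : HasDerivAt x₃ (x₄ t) t)
    (h₄ : HasDerivAt x₄ (12 * x₂ t * x₃ t) t) :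
    HasDerivAt (fun t => (1 / 4) * x₃ t ^ 2 + 2 * x₂ t ^ 3 - (1 / 2) * x₄ t * x₂ t) 0 t := by
  refine ((((h₃.pow 2).const_mul (1 / 4)).add ((h₂.pow 3).const_mul 2)).sub
    ((h₄.const_mul (1 / 2)).mul h₂)).congr_deriv ?_
  ring

end KdVIntegrals

theorem genus1_KdV_integrals (x2 x3 x4 : ℝ → ℂ)
    (h2 : Differentiable ℝ x2) (h3 : Differentiable ℝ x3) (h4 : Differentiable ℝ x4)
    (e2 : ∀ t, deriv x2 t = x3 t)
    (e3 : ∀ t, deriv x3 t = x4 t)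
    (e4 : ∀ t, deriv x4 t = 12 * x2 t * x3 t) :
    (∀ t, deriv (fun t => (1 / 2) * x4 t - 3 * (x2 t) ^ 2) t = 0) ∧
    (∀ t, deriv (fun t => (1 / 4) * (x3 t) ^ 2 + 2 * (x2 t) ^ 3 - (1 / 2) * x4 t * x2 t) t
      = 0) := by
  have H2 : ∀ t, HasDerivAt x2 (x3 t) t := fun t => e2 t ▸ (h2 t).hasDerivAt
  have H3 : ∀ t, HasDerivAt x3 (x4 t) t := fun t => e3 t ▸ (h3 t).hasDerivAt
  have H4 : ∀ t, HasDerivAt x4 (12 * x2 t * x3 t) t := fun t => e4 t ▸ (h4 t).hasDerivAt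
  exact ⟨fun t => (hasDerivAt_kdv_lambda4 (H2 t) (H4 t)).deriv,
    fun t => (hasDerivAt_kdv_lambda6 (H2 t) (H3 t) (H4 t)).deriv⟩
end

section
/- Let x₂, x₃, x₄, y₄, y₅, y₆ : ℝ → ℂ be differentiable functions satisfying the polynomial dynamical system x₂′ = x₃, x₃′ = x₄, x₄′ = 12 x₂ x₃ + 4 y₅, y₄′ = y₅, y₅′ = y₆, y₆′ = 4 x₃ y₄ + 8 x₂ y₅. Then the four functions λ₄ = −3x₂² + (1/2)x₄ − 2y₄, λ₆ = 2x₂³ + (1/4)x₃² − (1/2)x₂x₄ − 2x₂y₄ + (1/2)y₆, λ₈ = (4x₂² + y₄)y₄ − (1/2)(x₄y₄ − x₃y₅ + x₂y₆), and λ₁₀ = 2x₂y₄² + (1/4)y₅² − (1/2)y₄y₆ are constant along every solution (their derivatives vanish identically). -/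
/-! Each λ is differentiated by the product and chain rules; after substituting the equations of
motion for the derivatives of the coordinates, the result is a polynomial in the six coordinates
that vanishes identically. -/

namespace KdV

variable {x2 x3 x4 y4 y5 y6 : ℝ → ℂ} {t : ℝ}

theorem hasDerivAt_lambda4 (hx2 : HasDerivAt x2 (x3 t) t)
    (hx4 : HasDerivAt x4 (12 * x2 t * x3 t + 4 * y5 t) t) (hy4 : HasDerivAt y4 (y5 t) t) :
    HasDerivAt (fun t => -3 * (x2 t) ^ 2 + (1 / 2) * x4 t - 2 * y4 t) 0 t :=
  ((hx2.fun_pow 2).const_mul (-3)).fun_add (hx4.const_mul (1 / 2)) |>.fun_sub (hy4.const_mul 2)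
    |>.congr_deriv (by push_cast; ring)

theorem hasDerivAt_lambda6 (hx2 : HasDerivAt x2 (x3 t) t) (hx3 : HasDerivAt x3 (x4 t) t)
    (hx4 : HasDerivAt x4 (12 * x2 t * x3 t + 4 * y5 t) t) (hy4 : HasDerivAt y4 (y5 t) t)
    (hy6 : HasDerivAt y6 (4 * x3 t * y4 t + 8 * x2 t * y5 t) t) :
    HasDerivAt (fun t => 2 * (x2 t) ^ 3 + (1 / 4) * (x3 t) ^ 2 - (1 / 2) * x2 t * x4 t
      - 2 * x2 t * y4 t + (1 / 2) * y6 t) 0 t :=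
  (((((hx2.fun_pow 3).const_mul 2).fun_add ((hx3.fun_pow 2).const_mul (1 / 4))).fun_sub
    ((hx2.const_mul (1 / 2)).fun_mul hx4)).fun_sub ((hx2.const_mul 2).fun_mul hy4)).fun_add
    (hy6.const_mul (1 / 2)) |>.congr_deriv (by push_cast; ring)

theorem hasDerivAt_lambda8 (hx2 : HasDerivAt x2 (x3 t) t) (hx3 : HasDerivAt x3 (x4 t) t)
    (hx4 : HasDerivAt x4 (12 * x2 t * x3 t + 4 * y5 t) t) (hy4 : HasDerivAt y4 (y5 t) t)
    (hy5 : HasDerivAt y5 (y6 t) t)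
    (hy6 : HasDerivAt y6 (4 * x3 t * y4 t + 8 * x2 t * y5 t) t) :
    HasDerivAt (fun t => (4 * (x2 t) ^ 2 + y4 t) * y4 t
      - (1 / 2) * (x4 t * y4 t - x3 t * y5 t + x2 t * y6 t)) 0 t :=
  ((((hx2.fun_pow 2).const_mul 4).fun_add hy4).fun_mul hy4).fun_sub
    ((((hx4.fun_mul hy4).fun_sub (hx3.fun_mul hy5)).fun_add (hx2.fun_mul hy6)).const_mul (1 / 2))
    |>.congr_deriv (by push_cast; ring)

theorem hasDerivAt_lambda10 (hx2 : HasDerivAt x2 (x3 t) t) (hy4 : HasDerivAt y4 (y5 t) t)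
    (hy5 : HasDerivAt y5 (y6 t) t)
    (hy6 : HasDerivAt y6 (4 * x3 t * y4 t + 8 * x2 t * y5 t) t) :
    HasDerivAt (fun t => 2 * x2 t * (y4 t) ^ 2 + (1 / 4) * (y5 t) ^ 2
      - (1 / 2) * y4 t * y6 t) 0 t :=
  ((hx2.const_mul 2).fun_mul (hy4.fun_pow 2)).fun_add ((hy5.fun_pow 2).const_mul (1 / 4))
    |>.fun_sub ((hy4.const_mul (1 / 2)).fun_mul hy6) |>.congr_deriv (by push_cast; ring)

end KdV

theorem genus2_KdV_integrals (x2 x3 x4 y4 y5 y6 : ℝ → ℂ)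
    (hx2 : Differentiable ℝ x2) (hx3 : Differentiable ℝ x3) (hx4 : Differentiable ℝ x4)
    (hy4 : Differentiable ℝ y4) (hy5 : Differentiable ℝ y5) (hy6 : Differentiable ℝ y6)
    (ex2 : ∀ t, deriv x2 t = x3 t)
    (ex3 : ∀ t, deriv x3 t = x4 t)
    (ex4 : ∀ t, deriv x4 t = 12 * x2 t * x3 t + 4 * y5 t)
    (ey4 : ∀ t, deriv y4 t = y5 t)
    (ey5 : ∀ t, deriv y5 t = y6 t)
    (ey6 : ∀ t, deriv y6 t = 4 * x3 t * y4 t + 8 * x2 t * y5 t) :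
    (∀ t, deriv (fun t => -3 * (x2 t) ^ 2 + (1 / 2) * x4 t - 2 * y4 t) t = 0) ∧
    (∀ t, deriv (fun t => 2 * (x2 t) ^ 3 + (1 / 4) * (x3 t) ^ 2 - (1 / 2) * x2 t * x4 t
      - 2 * x2 t * y4 t + (1 / 2) * y6 t) t = 0) ∧
    (∀ t, deriv (fun t => (4 * (x2 t) ^ 2 + y4 t) * y4 t
      - (1 / 2) * (x4 t * y4 t - x3 t * y5 t + x2 t * y6 t)) t = 0) ∧
    (∀ t, deriv (fun t => 2 * x2 t * (y4 t) ^ 2 + (1 / 4) * (y5 t) ^ 2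
      - (1 / 2) * y4 t * y6 t) t = 0) := by
  have dx2 t := (hx2 t).hasDerivAt.congr_deriv (ex2 t)
  have dx3 t := (hx3 t).hasDerivAt.congr_deriv (ex3 t)
  have dx4 t := (hx4 t).hasDerivAt.congr_deriv (ex4 t)
  have dy4 t := (hy4 t).hasDerivAt.congr_deriv (ey4 t)
  have dy5 t := (hy5 t).hasDerivAt.congr_deriv (ey5 t)
  have dy6 t := (hy6 t).hasDerivAt.congr_deriv (ey6 t)
  exact ⟨fun t => (KdV.hasDerivAt_lambda4 (dx2 t) (dx4 t) (dy4 t)).deriv,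
    fun t => (KdV.hasDerivAt_lambda6 (dx2 t) (dx3 t) (dx4 t) (dy4 t) (dy6 t)).deriv,
    fun t => (KdV.hasDerivAt_lambda8 (dx2 t) (dx3 t) (dx4 t) (dy4 t) (dy5 t) (dy6 t)).deriv,
    fun t => (KdV.hasDerivAt_lambda10 (dx2 t) (dy4 t) (dy5 t) (dy6 t)).deriv⟩
end
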